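/- The function ρ(x) = (√3 / (2π)) · (x^2 − 1)^{−1/3} · ((|x| − 1)^{−1/3} − (|x| + 1)^{−1/3}), defined for real x with |x| > 1, is nonnegative and satisfies ∫_{{x ∈ ℝ : |x| > 1}} ρ(x) dx = 1; that is, ρ is the density of a probability measure on ℝ \ [−1, 1]. -/

import Mathlib

/-- The limiting zero-distribution density
`ρ(x) = (√3/(2π)) (x²−1)^{−1/3} ((|x|−1)^{−1/3} − (|x|+1)^{−1/3})`, `|x| > 1`
(all cube roots are the real positive cube roots of positive reals, via `rpow`). -/
noncomputable def limitDensity (x : ℝ) : ℝ :=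
  (Real.sqrt 3 / (2 * Real.pi)) * (x ^ 2 - 1) ^ (-(1 : ℝ) / 3) *
    ((|x| - 1) ^ (-(1 : ℝ) / 3) - (|x| + 1) ^ (-(1 : ℝ) / 3))

/-!
On `(1, ∞)` put `A = (x - 1)^(1/3)`, `B = (x + 1)^(1/3)` and `t = A / B`. Since `B³ - A³ = 2`,
the density simplifies to `ρ = (√3/π) / (A² B² (A² + AB + B²))`, and this is the derivative of
`(3/π) arctan((2t + 1)/√3)`. That primitive increases from `1/2` at `x = 1` (where `t = 0`) to `1`
at `x = ∞` (where `t → 1`), so `∫_{(1,∞)} ρ = 1/2`; as `ρ` is even, `(-∞, -1)` contributes the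
other half.
-/

open Real MeasureTheory Set Filter Topology

lemma rpow_one_div_three_pow_three {y : ℝ} (hy : 0 ≤ y) : (y ^ (1 / 3 : ℝ)) ^ 3 = y := by
  rw [← rpow_natCast, ← rpow_mul hy]
  norm_num

lemma hasDerivAt_rpow_one_div_three {y : ℝ} (hy : 0 < y) :
    HasDerivAt (fun y : ℝ => y ^ (1 / 3 : ℝ)) (1 / (3 * (y ^ (1 / 3 : ℝ)) ^ 2)) y := by
  convert hasDerivAt_rpow_const (p := 1 / 3) (Or.inl hy.ne') using 1
  rw [rpow_sub hy, rpow_one]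
  nth_rw 3 [← rpow_one_div_three_pow_three hy.le]
  field_simp

noncomputable def arctanProfile (t : ℝ) : ℝ := 3 / π * arctan ((2 * t + 1) / √3)

noncomputable def limitDensityPrimitive (x : ℝ) : ℝ :=
  arctanProfile (((x - 1) / (x + 1)) ^ (1 / 3 : ℝ))

lemma hasDerivAt_arctanProfile (t : ℝ) :
    HasDerivAt arctanProfile (3 * √3 / (2 * π) / (t ^ 2 + t + 1)) t := by
  refine ((((hasDerivAt_id' t).const_mul 2).add_const 1).div_const √3).arctan.const_mul (3 / π)
    |>.congr_deriv ?_
  have h3 : √3 ^ 2 = 3 := sq_sqrt (by norm_num)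
  have hq : t ^ 2 + t + 1 ≠ 0 := by nlinarith [sq_nonneg (2 * t + 1)]
  rw [eq_div_iff hq, div_pow, h3]
  field_simp
  rw [h3]
  ring

lemma limitDensity_eq_of_one_lt {x A B : ℝ} (hx : 1 < x) (hA : A = (x - 1) ^ (1 / 3 : ℝ))
    (hB : B = (x + 1) ^ (1 / 3 : ℝ)) :
    limitDensity x = √3 / π / (A ^ 2 * B ^ 2 * (A ^ 2 + A * B + B ^ 2)) := by
  have hxm : 0 < x - 1 := by linarith
  have hxp : 0 < x + 1 := by linarith
  have hApos : 0 < A := hA ▸ rpow_pos_of_pos hxm _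
  have hBpos : 0 < B := hB ▸ rpow_pos_of_pos hxp _
  have hcubes : B ^ 3 - A ^ 3 = 2 := by
    rw [hA, hB, rpow_one_div_three_pow_three hxm.le, rpow_one_div_three_pow_three hxp.le]
    ring
  rw [limitDensity, abs_of_pos (by linarith), show x ^ 2 - 1 = (x - 1) * (x + 1) by ring,
    neg_div, mul_rpow hxm.le hxp.le, rpow_neg hxm.le, rpow_neg hxp.le, ← hA, ← hB]
  field_simp
  linear_combination hcubes

lemma hasDerivAt_limitDensityPrimitive {x : ℝ} (hx : 1 < x) :
    HasDerivAt limitDensityPrimitive (limitDensity x) x := by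
  have hxm : 0 < x - 1 := by linarith
  have hxp : 0 < x + 1 := by linarith
  have hratio : HasDerivAt (fun y : ℝ => (y - 1) / (y + 1)) (2 / (x + 1) ^ 2) x :=
    (((hasDerivAt_id' x).sub_const 1).div ((hasDerivAt_id' x).add_const 1) hxp.ne').congr_deriv
      (by ring)
  have hchain := (hasDerivAt_arctanProfile _).comp x
    ((hasDerivAt_rpow_one_div_three (div_pos hxm hxp)).comp x hratio)
  refine hchain.congr_deriv ?_
  set A := (x - 1) ^ (1 / 3 : ℝ) with hA
  set B := (x + 1) ^ (1 / 3 : ℝ) with hB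
  have hApos : 0 < A := rpow_pos_of_pos hxm _
  have hBpos : 0 < B := rpow_pos_of_pos hxp _
  simp only [Function.comp_apply]
  rw [limitDensity_eq_of_one_lt hx hA hB, div_rpow hxm.le hxp.le, ← hA, ← hB,
    ← rpow_one_div_three_pow_three hxp.le, ← hB]
  field_simp

lemma limitDensity_nonneg {x : ℝ} (hx : 1 < |x|) : 0 ≤ limitDensity x := by
  have hsq : 0 ≤ x ^ 2 - 1 := by nlinarith [sq_abs x, abs_nonneg x]
  have hdiff : (|x| + 1) ^ (-(1 : ℝ) / 3) ≤ (|x| - 1) ^ (-(1 : ℝ) / 3) :=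
    rpow_le_rpow_of_nonpos (by linarith) (by linarith) (by norm_num)
  exact mul_nonneg (mul_nonneg (by positivity) (rpow_nonneg hsq _)) (sub_nonneg.2 hdiff)

lemma continuous_arctanProfile : Continuous arctanProfile := by
  unfold arctanProfile
  fun_prop

lemma arctanProfile_zero : arctanProfile 0 = 1 / 2 := by
  rw [arctanProfile, mul_zero, zero_add, ← tan_pi_div_six,
    arctan_tan (by linarith [pi_pos]) (by linarith [pi_pos])]
  field_simp
  norm_num

lemma arctanProfile_one : arctanProfile 1 = 1 := by
  have h : (2 * 1 + 1) / √3 = √3 := by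
    rw [div_eq_iff (by positivity), mul_self_sqrt (by norm_num)]
    norm_num
  rw [arctanProfile, h, ← tan_pi_div_three,
    arctan_tan (by linarith [pi_pos]) (by linarith [pi_pos])]
  field_simp

lemma limitDensityPrimitive_one : limitDensityPrimitive 1 = 1 / 2 := by
  simp [limitDensityPrimitive, arctanProfile_zero]

lemma continuousAt_limitDensityPrimitive_one : ContinuousAt limitDensityPrimitive 1 := by
  have hratio : ContinuousAt (fun x : ℝ => (x - 1) / (x + 1)) 1 :=
    ContinuousAt.div (by fun_prop) (by fun_prop) (by norm_num)
  exact continuous_arctanProfile.continuousAt.comp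
    ((continuousAt_rpow_const _ _ (Or.inr (by norm_num))).comp hratio)

lemma tendsto_limitDensityPrimitive_atTop : Tendsto limitDensityPrimitive atTop (𝓝 1) := by
  have hratio : Tendsto (fun x : ℝ => (x - 1) / (x + 1)) atTop (𝓝 1) := by
    have h : Tendsto (fun x : ℝ => 1 - 2 / (x + 1)) atTop (𝓝 (1 - 0)) :=
      tendsto_const_nhds.sub
        (tendsto_const_nhds.div_atTop (tendsto_atTop_add_const_right _ 1 tendsto_id))
    rw [sub_zero] at h
    refine h.congr' ?_
    filter_upwards [Ioi_mem_atTop (-1 : ℝ)] with x hx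
    have : x + 1 ≠ 0 := by linarith [mem_Ioi.1 hx]
    field_simp
    ring
  have hcbrt := (continuousAt_rpow_const 1 (1 / 3) (Or.inl one_ne_zero)).tendsto.comp hratio
  rw [one_rpow] at hcbrt
  have h := (continuous_arctanProfile.tendsto 1).comp hcbrt
  rwa [arctanProfile_one] at h

lemma integral_Ioi_one_limitDensity : ∫ x in Ioi 1, limitDensity x = 1 / 2 := by
  rw [integral_Ioi_of_hasDerivAt_of_nonneg
    continuousAt_limitDensityPrimitive_one.continuousWithinAt
    (fun _ hx => hasDerivAt_limitDensityPrimitive hx)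
    (fun x hx => limitDensity_nonneg (lt_of_lt_of_le hx (le_abs_self x)))
    tendsto_limitDensityPrimitive_atTop, limitDensityPrimitive_one]
  norm_num

lemma limitDensity_neg (x : ℝ) : limitDensity (-x) = limitDensity x := by
  rw [limitDensity, limitDensity, neg_sq, abs_neg]

lemma integral_Iio_neg_one_limitDensity : ∫ x in Iio (-1), limitDensity x = 1 / 2 := by
  rw [setIntegral_congr_set Iio_ae_eq_Iic, ← integral_comp_neg_Ioi]
  simp only [limitDensity_neg, integral_Ioi_one_limitDensity]

lemma setOf_lt_abs {α : Type*} [AddCommGroup α] [LinearOrder α] [IsOrderedAddMonoid α] (a : α) :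
    {x : α | a < |x|} = Iio (-a) ∪ Ioi a := by
  ext x
  simp only [mem_ofPred_eq, lt_abs, mem_union, mem_Iio, mem_Ioi, lt_neg, or_comm]

/-- The function `ρ = limitDensity` is nonnegative on `{|x| > 1}` and
`∫_{|x|>1} ρ(x) dx = 1`; i.e. `ρ` is the density of a probability measure on
`ℝ \ [−1, 1]`. -/
theorem stmt_15 :
    (∀ x : ℝ, 1 < |x| → 0 ≤ limitDensity x) ∧
    ∫ x in {x : ℝ | 1 < |x|}, limitDensity x = 1 := by
  refine ⟨fun _ hx => limitDensity_nonneg hx, ?_⟩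
  have hdisj : Disjoint (Iio (-1 : ℝ)) (Ioi 1) :=
    (Iic_disjoint_Ioi (by norm_num)).mono_left Iio_subset_Iic_self
  -- Both halves are integrable because their (Bochner) integrals are nonzero.
  rw [setOf_lt_abs, setIntegral_union hdisj measurableSet_Ioi
    (.of_integral_ne_zero (by norm_num [integral_Iio_neg_one_limitDensity]))
    (.of_integral_ne_zero (by norm_num [integral_Ioi_one_limitDensity])),
    integral_Iio_neg_one_limitDensity, integral_Ioi_one_limitDensity]
  norm_num
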